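/- (Equivalence of the two descriptions of the Marton-coding rate region, Theorem 8.) Let a₁, a₂, a_z, b₁, b₂, z₁, z₂ be nonnegative real numbers with b₁ ≥ z₁ and b₂ ≥ z₂ (playing the roles of I(U;Y₁), I(U;Y₂), I(U;Z), I(V₁;Y₁|U), I(V₂;Y₂|U), I(V₁;Z|U), I(V₂;Z|U)). For nonnegative reals R₁, R₂ the following are equivalent: (A) there exist R₁k, R₁s, R₂k, R₂s ≥ 0 with R₁ = R₁k + R₁s and R₂ = R₂k + R₂s such that, setting R_k := max{R₁k + R₂k, max{R₁k, R₂k} + a_z}, one has R₁s ≤ b₁ − z₁, R₂s ≤ b₂ − z₂, R_k + R₁s ≤ a₁ + b₁ − z₁, and R_k + R₂s ≤ a₂ + b₂ − z₂; (B) R₂ ≤ (b₂ − z₂) + a₂ − a_z, R₂ ≤ (b₁ − z₁) + (b₂ − z₂) + a₁ − a_z, R₁ ≤ (b₁ − z₁) + a₁ − a_z, R₁ ≤ (b₁ − z₁) + (b₂ − z₂) + a₂ − a_z, and R₁ + R₂ ≤ (b₁ − z₁) + (b₂ − z₂) + min{a₁, a₂}. -/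

import Mathlib

/-!
Substituting `R₁s = R₁ - R₁k`, `R₂s = R₂ - R₂k` and splitting the maximum in `R_k` turns (A) into
two conditions free of the split together with a system in the key rates `x = R₁k`, `y = R₂k`:
interval bounds `x ∈ [l₁, u₁]`, `y ∈ [l₂, u₂]` and difference bounds `y ≤ x + c₁`, `x ≤ y + c₂`.
Fourier–Motzkin elimination of `x` and `y` from such a system is explicit, with witness
`x = max l₁ (l₂ - c₁)`, `y = max l₂ (l₁ - c₂)` whenever the eliminated system is consistent, and
the resulting inequalities reduce to (B) by linear arithmetic.
-/

theorem max_add_max_add_le_iff {G : Type*} [AddCommGroup G] [LinearOrder G]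
    [IsOrderedAddMonoid G] (p q r s c : G) :
    max (p + q) (max p q + r) + s ≤ c ↔ p + q + s ≤ c ∧ p + r + s ≤ c ∧ q + r + s ≤ c := by
  simp only [← max_add_add_right, max_le_iff]

variable {α : Type*} [CommRing α] [LinearOrder α] [IsStrictOrderedRing α]

theorem exists_mem_Icc_le_add_iff {l₁ u₁ l₂ u₂ c₁ c₂ : α} :
    (∃ x ∈ Set.Icc l₁ u₁, ∃ y ∈ Set.Icc l₂ u₂, y ≤ x + c₁ ∧ x ≤ y + c₂) ↔
      l₁ ≤ u₁ ∧ l₂ ≤ u₂ ∧ l₂ ≤ u₁ + c₁ ∧ l₁ ≤ u₂ + c₂ ∧ 0 ≤ c₁ + c₂ := by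
  constructor
  · rintro ⟨x, ⟨hlx, hxu⟩, y, ⟨hly, hyu⟩, hyx, hxy⟩
    refine ⟨?_, ?_, ?_, ?_, ?_⟩ <;> linarith
  · rintro ⟨h₁, h₂, h₂₁, h₁₂, hc⟩
    have hx₁ := le_max_left l₁ (l₂ - c₁)
    have hx₂ := le_max_right l₁ (l₂ - c₁)
    have hy₁ := le_max_left l₂ (l₁ - c₂)
    have hy₂ := le_max_right l₂ (l₁ - c₂)
    refine ⟨max l₁ (l₂ - c₁), ⟨hx₁, max_le h₁ (by linarith)⟩,
      max l₂ (l₁ - c₂), ⟨hy₁, max_le h₂ (by linarith)⟩, ?_, ?_⟩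
    · exact max_le (by linarith) (by linarith)
    · exact max_le (by linarith) (by linarith)

theorem exists_rate_split_iff (a₁ a₂ az d₁ d₂ R₁ R₂ : α) :
    (∃ R₁k R₁s R₂k R₂s : α, 0 ≤ R₁k ∧ 0 ≤ R₁s ∧ 0 ≤ R₂k ∧ 0 ≤ R₂s ∧
        R₁ = R₁k + R₁s ∧ R₂ = R₂k + R₂s ∧ R₁s ≤ d₁ ∧ R₂s ≤ d₂ ∧
        max (R₁k + R₂k) (max R₁k R₂k + az) + R₁s ≤ a₁ + d₁ ∧
        max (R₁k + R₂k) (max R₁k R₂k + az) + R₂s ≤ a₂ + d₂) ↔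
      R₁ + az ≤ a₁ + d₁ ∧ R₂ + az ≤ a₂ + d₂ ∧
      ∃ x ∈ Set.Icc (max 0 (R₁ - d₁)) (min R₁ (a₂ + d₂ - R₂)),
        ∃ y ∈ Set.Icc (max 0 (R₂ - d₂)) (min R₂ (a₁ + d₁ - R₁)),
          y ≤ x + (a₁ + d₁ - az - R₁) ∧ x ≤ y + (a₂ + d₂ - az - R₂) := by
  simp only [max_add_max_add_le_iff, Set.mem_Icc, max_le_iff, le_min_iff]
  constructor
  · rintro ⟨R₁k, R₁s, R₂k, R₂s, hR₁k, hR₁s, hR₂k, hR₂s, rfl, rfl, hd₁, hd₂,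
      ⟨h₁, h₁x, h₁y⟩, ⟨h₂, h₂x, h₂y⟩⟩
    exact ⟨by linarith, by linarith, R₁k, ⟨⟨hR₁k, by linarith⟩, by linarith, by linarith⟩,
      R₂k, ⟨⟨hR₂k, by linarith⟩, by linarith, by linarith⟩, by linarith, by linarith⟩
  · rintro ⟨h₁, h₂, x, ⟨⟨hx, hxd⟩, hxR, hxa⟩, y, ⟨⟨hy, hyd⟩, hyR, hya⟩, hyx, hxy⟩
    refine ⟨x, R₁ - x, y, R₂ - y, hx, by linarith, hy, by linarith, by ring, by ring,
      by linarith, by linarith, ⟨?_, ?_, ?_⟩, ⟨?_, ?_, ?_⟩⟩ <;> linarith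

theorem marton_region_equiv_general
    (a₁ a₂ az b₁ b₂ z₁ z₂ : ℝ)
    (haz : 0 ≤ az)
    (hbz₁ : z₁ ≤ b₁) (hbz₂ : z₂ ≤ b₂)
    (R₁ R₂ : ℝ) (hR₁ : 0 ≤ R₁) (hR₂ : 0 ≤ R₂) :
    (∃ R₁k R₁s R₂k R₂s : ℝ, 0 ≤ R₁k ∧ 0 ≤ R₁s ∧ 0 ≤ R₂k ∧ 0 ≤ R₂s ∧
        R₁ = R₁k + R₁s ∧ R₂ = R₂k + R₂s ∧
        R₁s ≤ b₁ - z₁ ∧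
        R₂s ≤ b₂ - z₂ ∧
        max (R₁k + R₂k) (max R₁k R₂k + az) + R₁s ≤ a₁ + b₁ - z₁ ∧
        max (R₁k + R₂k) (max R₁k R₂k + az) + R₂s ≤ a₂ + b₂ - z₂) ↔
    (R₂ ≤ (b₂ - z₂) + a₂ - az ∧
      R₂ ≤ (b₁ - z₁) + (b₂ - z₂) + a₁ - az ∧
      R₁ ≤ (b₁ - z₁) + a₁ - az ∧
      R₁ ≤ (b₁ - z₁) + (b₂ - z₂) + a₂ - az ∧
      R₁ + R₂ ≤ (b₁ - z₁) + (b₂ - z₂) + min a₁ a₂) := by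
  rw [add_sub_assoc a₁, add_sub_assoc a₂, exists_rate_split_iff, exists_mem_Icc_le_add_iff]
  simp only [max_le_iff, le_min_iff, ← min_add_add_right, ← min_add_add_left]
  constructor <;> intro h <;> casesm* _ ∧ _ <;> and_intros <;> linarith

/-- Equivalence of the two descriptions of the Marton-coding rate region (Theorem 8):
the split form (A) in terms of `R₁ = R₁k + R₁s`, `R₂ = R₂k + R₂s` is equivalent to the
direct form (B) in terms of `(R₁, R₂)`.  Here `a₁, a₂, a_z, b₁, b₂, z₁, z₂` play the
roles of `I(U;Y₁), I(U;Y₂), I(U;Z), I(V₁;Y₁|U), I(V₂;Y₂|U), I(V₁;Z|U), I(V₂;Z|U)`,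
with `b₁ ≥ z₁` and `b₂ ≥ z₂`. -/
theorem marton_region_equiv
    (a₁ a₂ az b₁ b₂ z₁ z₂ : ℝ)
    (ha₁ : 0 ≤ a₁) (ha₂ : 0 ≤ a₂) (haz : 0 ≤ az)
    (hb₁ : 0 ≤ b₁) (hb₂ : 0 ≤ b₂) (hz₁ : 0 ≤ z₁) (hz₂ : 0 ≤ z₂)
    (hbz₁ : z₁ ≤ b₁) (hbz₂ : z₂ ≤ b₂)
    (R₁ R₂ : ℝ) (hR₁ : 0 ≤ R₁) (hR₂ : 0 ≤ R₂) :
    (∃ R₁k R₁s R₂k R₂s : ℝ, 0 ≤ R₁k ∧ 0 ≤ R₁s ∧ 0 ≤ R₂k ∧ 0 ≤ R₂s ∧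
        R₁ = R₁k + R₁s ∧ R₂ = R₂k + R₂s ∧
        R₁s ≤ b₁ - z₁ ∧
        R₂s ≤ b₂ - z₂ ∧
        max (R₁k + R₂k) (max R₁k R₂k + az) + R₁s ≤ a₁ + b₁ - z₁ ∧
        max (R₁k + R₂k) (max R₁k R₂k + az) + R₂s ≤ a₂ + b₂ - z₂) ↔
    (R₂ ≤ (b₂ - z₂) + a₂ - az ∧
      R₂ ≤ (b₁ - z₁) + (b₂ - z₂) + a₁ - az ∧
      R₁ ≤ (b₁ - z₁) + a₁ - az ∧
      R₁ ≤ (b₁ - z₁) + (b₂ - z₂) + a₂ - az ∧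
      R₁ + R₂ ≤ (b₁ - z₁) + (b₂ - z₂) + min a₁ a₂) :=
  marton_region_equiv_general a₁ a₂ az b₁ b₂ z₁ z₂ haz hbz₁ hbz₂ R₁ R₂ hR₁ hR₂
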